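/- The split-octonion algebra O over a field F is the disjoint union of the Aut(O)-orbits of the elements α·1 (for α ∈ F) and of the orbits O(α,β) = Aut(O)·c(α,β) (for α, β ∈ F); that is, every element of O lies in the orbit of exactly one element of the list {α·1 : α ∈ F} ∪ {c(α,β) : α,β ∈ F}, and distinct elements of this list lie in distinct orbits. -/

import Mathlib

@[ext]
structure Zorn (F : Type*) where
  x1 : F
  u : Fin 3 → F
  v : Fin 3 → F
  x2 : F

namespace Zorn

variable {F : Type*} [Field F]

/-- Dot product on `F³`. -/
def dot (x y : Fin 3 → F) : F := x 0 * y 0 + x 1 * y 1 + x 2 * y 2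

/-- Cross product on `F³`. -/
def cross (x y : Fin 3 → F) : Fin 3 → F :=
  ![x 1 * y 2 - x 2 * y 1, x 2 * y 0 - x 0 * y 2, x 0 * y 1 - x 1 * y 0]

instance : Add (Zorn F) :=
  ⟨fun a b => ⟨a.x1 + b.x1, a.u + b.u, a.v + b.v, a.x2 + b.x2⟩⟩

instance : Zero (Zorn F) := ⟨⟨0, 0, 0, 0⟩⟩

instance : Neg (Zorn F) := ⟨fun a => ⟨-a.x1, -a.u, -a.v, -a.x2⟩⟩

instance : Sub (Zorn F) :=
  ⟨fun a b => ⟨a.x1 - b.x1, a.u - b.u, a.v - b.v, a.x2 - b.x2⟩⟩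

instance : SMul F (Zorn F) :=
  ⟨fun c a => ⟨c * a.x1, c • a.u, c • a.v, c * a.x2⟩⟩

/-- Zorn vector-matrix multiplication. -/
instance : Mul (Zorn F) :=
  ⟨fun a b =>
    ⟨a.x1 * b.x1 + dot a.u b.v,
     a.x1 • b.u + b.x2 • a.u - cross a.v b.v,
     b.x1 • a.v + a.x2 • b.v + cross a.u b.u,
     a.x2 * b.x2 + dot a.v b.u⟩⟩

instance : One (Zorn F) := ⟨⟨1, 0, 0, 1⟩⟩

@[simp] lemma add_def (a b : Zorn F) :
    a + b = ⟨a.x1 + b.x1, a.u + b.u, a.v + b.v, a.x2 + b.x2⟩ := rfl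
@[simp] lemma zero_def : (0 : Zorn F) = ⟨0, 0, 0, 0⟩ := rfl
@[simp] lemma neg_def (a : Zorn F) : -a = ⟨-a.x1, -a.u, -a.v, -a.x2⟩ := rfl
@[simp] lemma sub_def (a b : Zorn F) :
    a - b = ⟨a.x1 - b.x1, a.u - b.u, a.v - b.v, a.x2 - b.x2⟩ := rfl
@[simp] lemma smul_def (c : F) (a : Zorn F) :
    c • a = ⟨c * a.x1, c • a.u, c • a.v, c * a.x2⟩ := rfl

instance : AddCommGroup (Zorn F) where
  add_assoc a b c := by ext <;> simp [add_assoc]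
  zero_add a := by ext <;> simp
  add_zero a := by ext <;> simp
  add_comm a b := by ext <;> simp [add_comm]
  neg_add_cancel a := by ext <;> simp
  sub_eq_add_neg a b := by ext <;> simp [sub_eq_add_neg]
  nsmul := nsmulRec
  zsmul := zsmulRec

instance : Module F (Zorn F) where
  one_smul a := by ext <;> simp
  mul_smul c d a := by ext <;> simp [mul_assoc, mul_smul]
  smul_zero c := by ext <;> simp
  smul_add c a b := by ext <;> simp [mul_add]
  add_smul c d a := by ext <;> simp [add_mul, add_smul]
  zero_smul a := by ext <;> simp

/-- The trace of a split octonion. -/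
def trace (a : Zorn F) : F := a.x1 + a.x2

/-- The norm of a split octonion. -/
def norm (a : Zorn F) : F := a.x1 * a.x2 - dot a.u a.v

/-- The conjugate of a split octonion. -/
def conj (a : Zorn F) : Zorn F := ⟨a.x2, -a.u, -a.v, a.x1⟩

end Zorn

namespace Zorn

variable {F : Type*} [Field F]

/-- Iterated powers of a split octonion (well defined by power-associativity). -/
def pow (a : Zorn F) : ℕ → Zorn F
  | 0 => 1
  | n + 1 => a * pow a n

/-- `P y z n` is the generalized Fibonacci polynomial `p_{n-1}(y,z)`:
`p_{-1} = 0`, `p_0 = 1`, `p_{k+1} = y p_k + z p_{k-1}`. -/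
def P (y z : F) : ℕ → F
  | 0 => 0
  | 1 => 1
  | n + 2 => y * P y z (n + 1) + z * P y z n

/-- `f̂(y,z) = Σ_{k=1}^n α_k p_{k-1}(y,z)`. -/
def fHat (n : ℕ) (α : ℕ → F) (y z : F) : F := ∑ k ∈ Finset.Icc 1 n, α k * P y z k

/-- `f̌(y,z) = Σ_{k=1}^n α_k p_{k-2}(y,z)`. -/
def fCheck (n : ℕ) (α : ℕ → F) (y z : F) : F := ∑ k ∈ Finset.Icc 1 n, α k * P y z (k - 1)

/-- `f(x) = Σ_{k=1}^n α_k x^k` for `x` in the split octonions. -/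
def fOct (n : ℕ) (α : ℕ → F) (x : Zorn F) : Zorn F := ∑ k ∈ Finset.Icc 1 n, α k • pow x k

/-- `f(ν) = Σ_{k=1}^n α_k ν^k` for `ν ∈ F`. -/
def fScalar (n : ℕ) (α : ℕ → F) (y : F) : F := ∑ k ∈ Finset.Icc 1 n, α k * y ^ k

/-- `g : O → O` is an `F`-algebra automorphism of the split octonions. -/
def IsAlgAut (g : Zorn F → Zorn F) : Prop :=
  Function.Bijective g ∧ (∀ a b, g (a + b) = g a + g b) ∧
    (∀ (c : F) (a : Zorn F), g (c • a) = c • g a) ∧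
    (∀ a b, g (a * b) = g a * g b) ∧ g 1 = 1

/-- The `Aut(O)`-orbit of a split octonion. -/
def orbit (a : Zorn F) : Set (Zorn F) := {x | ∃ g, IsAlgAut g ∧ g a = x}

/-- The canonical octonion `c(α,β)`. -/
def cmat (α β : F) : Zorn F := ⟨α, ![β, 0, 0], ![1, 0, 0], 0⟩

end Zorn

/-!
An automorphism fixes every scalar `c • 1`, and it carries the relation
`c(α, β)² = α c(α, β) + β` to the image of `c(α, β)`; since `c(α', β')` is not a scalar, the
relation `c(α', β')² = α c(α', β') + β` forces `(α', β') = (α, β)`. So distinct representatives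
lie in distinct orbits.

Conversely, a non-scalar element is moved to one with `v ≠ 0` by `swap` or a shear, then to one
with `v = e₁` by an `SL₃`-automorphism. A shear followed by an `SL₃`-automorphism fixing
`v = e₁` makes `u` a multiple of `e₁`, and the shear conjugated by `swap` then kills the
`x2`-entry, which leaves `c(α, β)`.
-/

namespace Zorn

lemma ext' {F : Type*} {x y : Zorn F} (h1 : x.x1 = y.x1)
    (hu0 : x.u 0 = y.u 0) (hu1 : x.u 1 = y.u 1) (hu2 : x.u 2 = y.u 2)
    (hv0 : x.v 0 = y.v 0) (hv1 : x.v 1 = y.v 1) (hv2 : x.v 2 = y.v 2)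
    (h2 : x.x2 = y.x2) : x = y := by
  ext i <;> [exact h1; fin_cases i; fin_cases i; exact h2] <;> assumption

variable {F : Type*} [Field F]

lemma mul_def (a b : Zorn F) : a * b =
    ⟨a.x1 * b.x1 + dot a.u b.v,
     a.x1 • b.u + b.x2 • a.u - cross a.v b.v,
     b.x1 • a.v + a.x2 • b.v + cross a.u b.u,
     a.x2 * b.x2 + dot a.v b.u⟩ := rfl

lemma one_def : (1 : Zorn F) = ⟨1, 0, 0, 1⟩ := rfl

lemma isAlgAut_of_leftInverse_of_rightInverse {g g' : Zorn F → Zorn F}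
    (hl : Function.LeftInverse g' g) (hr : Function.RightInverse g' g)
    (hadd : ∀ a b, g (a + b) = g a + g b) (hsmul : ∀ (c : F) a, g (c • a) = c • g a)
    (hmul : ∀ a b, g (a * b) = g a * g b) (hone : g 1 = 1) : IsAlgAut g :=
  ⟨⟨hl.injective, hr.surjective⟩, hadd, hsmul, hmul, hone⟩

lemma isAlgAut_id : IsAlgAut (id : Zorn F → Zorn F) :=
  ⟨Function.bijective_id, fun _ _ => rfl, fun _ _ => rfl, fun _ _ => rfl, rfl⟩

namespace IsAlgAut

variable {g f : Zorn F → Zorn F}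

lemma comp (hg : IsAlgAut g) (hf : IsAlgAut f) : IsAlgAut (g ∘ f) := by
  obtain ⟨hgb, hga, hgs, hgm, hg1⟩ := hg
  obtain ⟨hfb, hfa, hfs, hfm, hf1⟩ := hf
  refine ⟨hgb.comp hfb, fun a b => ?_, fun c a => ?_, fun a b => ?_, ?_⟩ <;>
    simp only [Function.comp_apply, hfa, hga, hfs, hgs, hfm, hgm, hf1, hg1]

lemma exists_leftInverse (hg : IsAlgAut g) : ∃ g', IsAlgAut g' ∧ Function.LeftInverse g' g := by
  obtain ⟨hgb, hga, hgs, hgm, hg1⟩ := hg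
  obtain ⟨g', hl, hr⟩ := Function.bijective_iff_has_inverse.mp hgb
  refine ⟨g', isAlgAut_of_leftInverse_of_rightInverse hr hl
    (fun a b => hgb.1 ?_) (fun c a => hgb.1 ?_) (fun a b => hgb.1 ?_) (hgb.1 ?_), hl⟩
  · rw [hga, hr, hr, hr]
  · rw [hgs, hr, hr]
  · rw [hgm, hr, hr, hr]
  · rw [hg1, hr]

lemma map_add (hg : IsAlgAut g) (a b : Zorn F) : g (a + b) = g a + g b := hg.2.1 a b

lemma map_smul (hg : IsAlgAut g) (c : F) (a : Zorn F) : g (c • a) = c • g a := hg.2.2.1 c a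

lemma map_mul (hg : IsAlgAut g) (a b : Zorn F) : g (a * b) = g a * g b := hg.2.2.2.1 a b

lemma map_smul_one (hg : IsAlgAut g) (c : F) : g (c • 1) = c • 1 := by
  rw [hg.map_smul, hg.2.2.2.2]

end IsAlgAut

lemma mem_orbit_self (x : Zorn F) : x ∈ orbit x := ⟨id, isAlgAut_id, rfl⟩

lemma IsAlgAut.mem_orbit {g : Zorn F → Zorn F} (hg : IsAlgAut g) (x : Zorn F) :
    g x ∈ orbit x := ⟨g, hg, rfl⟩

lemma mem_orbit_symm {x y : Zorn F} (h : x ∈ orbit y) : y ∈ orbit x := by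
  obtain ⟨g, hg, rfl⟩ := h
  obtain ⟨g', hg', hl⟩ := hg.exists_leftInverse
  exact ⟨g', hg', hl y⟩

lemma mem_orbit_trans {x y z : Zorn F} (hxy : x ∈ orbit y) (hyz : y ∈ orbit z) :
    x ∈ orbit z := by
  obtain ⟨g, hg, rfl⟩ := hxy
  obtain ⟨f, hf, rfl⟩ := hyz
  exact ⟨g ∘ f, hg.comp hf, rfl⟩

lemma mem_orbit_smul_one_iff {x : Zorn F} {c : F} : x ∈ orbit (c • 1) ↔ x = c • 1 := by
  refine ⟨?_, fun h => h ▸ mem_orbit_self _⟩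
  rintro ⟨g, hg, rfl⟩
  exact hg.map_smul_one c

/-- `u` is transformed by the matrix `M` with rows `a, b, c`, and `v` by its cofactor matrix,
which is `(M⁻¹)ᵀ` when `det M = dot a (cross b c) = 1`. -/
def sl3Map (a b c : Fin 3 → F) (x : Zorn F) : Zorn F :=
  ⟨x.x1, ![dot a x.u, dot b x.u, dot c x.u],
   ![dot (cross b c) x.v, dot (cross c a) x.v, dot (cross a b) x.v], x.x2⟩

lemma isAlgAut_sl3Map {a b c : Fin 3 → F} (h : dot a (cross b c) = 1) :
    IsAlgAut (sl3Map a b c) := by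
  simp only [dot, cross, Matrix.cons_val] at h
  refine isAlgAut_of_leftInverse_of_rightInverse (g' := fun x => ⟨x.x1,
      fun i => cross b c i * x.u 0 + cross c a i * x.u 1 + cross a b i * x.u 2,
      fun i => a i * x.v 0 + b i * x.v 1 + c i * x.v 2, x.x2⟩)
    (fun x => ?_) (fun x => ?_) (fun x y => ?_) (fun r x => ?_) (fun x y => ?_) ?_
  · apply ext' <;> simp only [sl3Map, dot, cross, Matrix.cons_val]
    · linear_combination (x.u 0) * h
    · linear_combination (x.u 1) * h
    · linear_combination (x.u 2) * h
    · linear_combination (x.v 0) * h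
    · linear_combination (x.v 1) * h
    · linear_combination (x.v 2) * h
  · apply ext' <;> simp only [sl3Map, dot, cross, Matrix.cons_val]
    · linear_combination (x.u 0) * h
    · linear_combination (x.u 1) * h
    · linear_combination (x.u 2) * h
    · linear_combination (x.v 0) * h
    · linear_combination (x.v 1) * h
    · linear_combination (x.v 2) * h
  · apply ext' <;> simp [sl3Map, dot, cross] <;> ring
  · apply ext' <;> simp [sl3Map, dot, cross] <;> ring
  -- `Mu · cof(M) v = det M (u · v)` and `cof(M) v × cof(M) v' = det M · M (v × v')`
  · apply ext' <;> simp only [sl3Map, mul_def, dot, cross, Matrix.cons_val,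
      Pi.add_apply, Pi.sub_apply, Pi.smul_apply, smul_eq_mul]
    · linear_combination (-(x.u 0 * y.v 0 + x.u 1 * y.v 1 + x.u 2 * y.v 2)) * h
    · linear_combination (a 0 * (x.v 1 * y.v 2 - x.v 2 * y.v 1) +
        a 1 * (x.v 2 * y.v 0 - x.v 0 * y.v 2) + a 2 * (x.v 0 * y.v 1 - x.v 1 * y.v 0)) * h
    · linear_combination (b 0 * (x.v 1 * y.v 2 - x.v 2 * y.v 1) +
        b 1 * (x.v 2 * y.v 0 - x.v 0 * y.v 2) + b 2 * (x.v 0 * y.v 1 - x.v 1 * y.v 0)) * h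
    · linear_combination (c 0 * (x.v 1 * y.v 2 - x.v 2 * y.v 1) +
        c 1 * (x.v 2 * y.v 0 - x.v 0 * y.v 2) + c 2 * (x.v 0 * y.v 1 - x.v 1 * y.v 0)) * h
    · ring
    · ring
    · ring
    · linear_combination (-(x.v 0 * y.u 0 + x.v 1 * y.u 1 + x.v 2 * y.u 2)) * h
  · apply ext' <;> simp [sl3Map, one_def, dot]

def shear (w : Fin 3 → F) (x : Zorn F) : Zorn F :=
  ⟨x.x1 - dot w x.u, x.u + cross w x.v, x.v + (x.x1 - x.x2 - dot w x.u) • w, x.x2 + dot w x.u⟩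

def swap (x : Zorn F) : Zorn F := ⟨x.x2, -x.v, -x.u, x.x1⟩

lemma isAlgAut_shear (w : Fin 3 → F) : IsAlgAut (shear w) := by
  refine isAlgAut_of_leftInverse_of_rightInverse (g' := shear (-w))
    (fun x => ?_) (fun x => ?_) (fun x y => ?_) (fun r x => ?_) (fun x y => ?_) ?_ <;>
  apply ext' <;>
  simp only [shear, mul_def, one_def, add_def, smul_def, dot, cross, Matrix.cons_val,
    Pi.add_apply, Pi.sub_apply, Pi.smul_apply, Pi.neg_apply, Pi.zero_apply, smul_eq_mul] <;>
  ring

lemma isAlgAut_swap : IsAlgAut (swap : Zorn F → Zorn F) := by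
  refine isAlgAut_of_leftInverse_of_rightInverse (g' := swap)
    (fun x => ?_) (fun x => ?_) (fun x y => ?_) (fun r x => ?_) (fun x y => ?_) ?_ <;>
  apply ext' <;>
  simp only [swap, mul_def, one_def, add_def, smul_def, dot, cross, Matrix.cons_val,
    Pi.add_apply, Pi.sub_apply, Pi.smul_apply, Pi.neg_apply, Pi.zero_apply, smul_eq_mul] <;>
  ring

lemma exists_dot_cross_eq_one {v : Fin 3 → F} (hv : v ≠ 0) : ∃ b c, dot v (cross b c) = 1 := by
  have : v 0 ≠ 0 ∨ v 1 ≠ 0 ∨ v 2 ≠ 0 := by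
    contrapose! hv
    ext i; fin_cases i <;> simp [hv]
  rcases this with h | h | h
  · exact ⟨![0, 1, 0], ![0, 0, (v 0)⁻¹], by simp [dot, cross, h]⟩
  · exact ⟨![0, 0, 1], ![(v 1)⁻¹, 0, 0], by simp [dot, cross, h]⟩
  · exact ⟨![1, 0, 0], ![0, (v 2)⁻¹, 0], by simp [dot, cross, h]⟩

lemma sl3Map_self_v {x : Zorn F} {b c : Fin 3 → F} (h : dot x.v (cross b c) = 1) :
    (sl3Map x.v b c x).v = ![1, 0, 0] := by
  simp only [dot, cross, Matrix.cons_val] at h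
  ext i; fin_cases i <;> simp [sl3Map, dot, cross]
  · linear_combination h
  all_goals ring

lemma cmat_mem_orbit_of_u_eq_of_v_eq {x : Zorn F} {β : F} (hu : x.u = ![β, 0, 0])
    (hv : x.v = ![1, 0, 0]) : cmat (x.x1 + x.x2) (β - x.x1 * x.x2) ∈ orbit x := by
  have hg := isAlgAut_swap.comp ((isAlgAut_shear ![-x.x2, 0, 0]).comp isAlgAut_swap)
  convert hg.mem_orbit x using 1
  apply ext' <;> simp [swap, shear, cmat, dot, cross, hu, hv]; ring

lemma IsAlgAut.exists_cmat_mem_orbit_of_map {g : Zorn F → Zorn F} (hg : IsAlgAut g)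
    {x : Zorn F} (h : ∃ α β, cmat α β ∈ orbit (g x)) : ∃ α β, cmat α β ∈ orbit x := by
  obtain ⟨α, β, h⟩ := h
  exact ⟨α, β, mem_orbit_trans h (hg.mem_orbit x)⟩

lemma exists_cmat_mem_orbit_of_v_eq {x : Zorn F} (hv : x.v = ![1, 0, 0]) :
    ∃ α β, cmat α β ∈ orbit x := by
  set y := shear ![0, x.u 2, -x.u 1] x
  have hyu : y.u = ![x.u 0, 0, 0] := by
    ext i; fin_cases i <;> simp [y, shear, dot, cross, hv, Matrix.vecHead, Matrix.vecTail]
  have hyv : y.v 0 = 1 := by simp [y, shear, dot, hv]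
  have hdet : dot y.v (cross ![0, 1, 0] ![0, 0, 1]) = 1 := by simp [dot, cross, hyv]
  set z := sl3Map y.v ![0, 1, 0] ![0, 0, 1] y
  have hzu : z.u = ![x.u 0, 0, 0] := by
    ext i; fin_cases i <;> simp [z, sl3Map, dot, hyu, hyv]
  refine (isAlgAut_shear ![0, x.u 2, -x.u 1]).exists_cmat_mem_orbit_of_map ?_
  refine (isAlgAut_sl3Map hdet).exists_cmat_mem_orbit_of_map ?_
  exact ⟨_, _, cmat_mem_orbit_of_u_eq_of_v_eq hzu (sl3Map_self_v hdet)⟩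

lemma exists_cmat_mem_orbit_of_v_ne_zero {x : Zorn F} (hv : x.v ≠ 0) :
    ∃ α β, cmat α β ∈ orbit x := by
  obtain ⟨b, c, h⟩ := exists_dot_cross_eq_one hv
  exact (isAlgAut_sl3Map h).exists_cmat_mem_orbit_of_map
    (exists_cmat_mem_orbit_of_v_eq (sl3Map_self_v h))

lemma exists_cmat_mem_orbit {x : Zorn F} (hx : ∀ c : F, x ≠ c • 1) :
    ∃ α β, cmat α β ∈ orbit x := by
  by_cases hv : x.v = 0
  · by_cases hu : x.u = 0
    · have h12 : x.x1 - x.x2 ≠ 0 := fun h =>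
        hx x.x1 (by apply ext' <;> simp [one_def, hu, hv]; linear_combination -h)
      refine (isAlgAut_shear ![1, 0, 0]).exists_cmat_mem_orbit_of_map
        (exists_cmat_mem_orbit_of_v_ne_zero fun h => h12 ?_)
      simpa [shear, dot, hu, hv] using congrFun h 0
    · exact isAlgAut_swap.exists_cmat_mem_orbit_of_map
        (exists_cmat_mem_orbit_of_v_ne_zero (by simpa [swap] using hu))
  · exact exists_cmat_mem_orbit_of_v_ne_zero hv

lemma cmat_mul_self (α β : F) : cmat α β * cmat α β = α • cmat α β + β • (1 : Zorn F) := by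
  apply ext' <;> simp [cmat, mul_def, one_def, dot, cross]

lemma cmat_ne_smul_one (α β c : F) : cmat α β ≠ c • 1 := by
  intro h
  simpa [cmat, one_def] using congrArg (fun z => z.v 0) h

lemma eq_of_cmat_mem_orbit_cmat {α β α' β' : F} (h : cmat α' β' ∈ orbit (cmat α β)) :
    α' = α ∧ β' = β := by
  obtain ⟨g, hg, hgc⟩ := h
  have hsq : cmat α' β' * cmat α' β' = α • cmat α' β' + β • 1 := by
    rw [← hgc, ← hg.map_mul, cmat_mul_self, hg.map_add, hg.map_smul, hg.map_smul_one]
  rw [cmat_mul_self] at hsq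
  have hv := congrArg (fun z => z.v 0) hsq
  have hx := congrArg (fun z => z.x1) hsq
  simp only [cmat, one_def, add_def, smul_def, Pi.add_apply, Pi.smul_apply, Matrix.cons_val,
    Pi.zero_apply, smul_eq_mul] at hv hx
  constructor
  · linear_combination hv
  · linear_combination hx - α' * hv

def orbitRep : F ⊕ F × F → Zorn F := Sum.elim (fun α => α • 1) (fun p => cmat p.1 p.2)

lemma exists_mem_orbit_orbitRep (x : Zorn F) : ∃ r, x ∈ orbit (orbitRep r) := by
  by_cases hx : ∀ c : F, x ≠ c • 1
  · obtain ⟨α, β, h⟩ := exists_cmat_mem_orbit hx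
    exact ⟨Sum.inr (α, β), mem_orbit_symm h⟩
  · obtain ⟨c, rfl⟩ := not_forall_not.mp hx
    exact ⟨Sum.inl c, mem_orbit_self _⟩

lemma eq_of_orbitRep_mem_orbit {r s : F ⊕ F × F} (h : orbitRep r ∈ orbit (orbitRep s)) :
    r = s := by
  rcases r with γ | ⟨α, β⟩ <;> rcases s with γ' | ⟨α', β'⟩ <;>
    simp only [orbitRep, Sum.elim_inl, Sum.elim_inr] at h
  · simpa [one_def] using congrArg x1 (mem_orbit_smul_one_iff.mp h)
  · exact absurd (mem_orbit_smul_one_iff.mp (mem_orbit_symm h)) (cmat_ne_smul_one _ _ _)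
  · exact absurd (mem_orbit_smul_one_iff.mp h) (cmat_ne_smul_one _ _ _)
  · obtain ⟨rfl, rfl⟩ := eq_of_cmat_mem_orbit_cmat h
    rfl

end Zorn

/-- the split octonions are the disjoint union of the `Aut(O)`-orbits of the
elements `α·1` (`α ∈ F`) and `c(α,β)` (`α, β ∈ F`): every element lies in the orbit of
exactly one element of this list. -/
theorem zorn_orbit_classification {F : Type*} [Field F] (x : Zorn F) :
    ∃! r : F ⊕ F × F,
      x ∈ Zorn.orbit (Sum.elim (fun α => α • (1 : Zorn F)) (fun p => Zorn.cmat p.1 p.2) r) := by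
  obtain ⟨r, hr⟩ := Zorn.exists_mem_orbit_orbitRep x
  exact ⟨r, hr, fun s hs =>
    Zorn.eq_of_orbitRep_mem_orbit (Zorn.mem_orbit_trans (Zorn.mem_orbit_symm hs) hr)⟩
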